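/- Let P be a partition of the set {1, 2, …, 17} into nonempty blocks, each of which is a set of consecutive integers, such that every block has cardinality at most 3, and the block containing 1 and the block containing 17 each have cardinality at most 2. Then P has at least 7 blocks. -/
import Mathlib


/-- Let `P` be a partition of `{1, …, 17}` into nonempty blocks,
each of which is a set of consecutive integers, such that every block has
cardinality at most 3, and the block containing 1 and the block containing 17
each have cardinality at most 2. Then `P` has at least 7 blocks. -/
theorem partition_of_seventeen_needs_seven_blocks
    (P : Finpartition (Finset.Icc (1 : ℕ) 17))
    (hconsec : ∀ b ∈ P.parts, ∃ a m : ℕ, b = Finset.Icc a m)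
    (hcard : ∀ b ∈ P.parts, b.card ≤ 3)
    (hleft : ∀ b ∈ P.parts, (1 : ℕ) ∈ b → b.card ≤ 2)
    (hright : ∀ b ∈ P.parts, (17 : ℕ) ∈ b → b.card ≤ 2) :
    7 ≤ P.parts.card := by
  classical
  have h1 : (1:ℕ) ∈ Finset.Icc (1:ℕ) 17 := by decide
  have h17 : (17:ℕ) ∈ Finset.Icc (1:ℕ) 17 := by decide
  obtain ⟨b1, hb1, hb1m⟩ := P.exists_mem h1
  obtain ⟨b2, hb2, hb2m⟩ := P.exists_mem h17
  have hne : b1 ≠ b2 := by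
    intro h
    subst h
    obtain ⟨a, m, rfl⟩ := hconsec b1 hb1
    have hc := hleft _ hb1 hb1m
    rw [Nat.card_Icc] at hc
    have ha := (Finset.mem_Icc.mp hb1m).1
    have hm := (Finset.mem_Icc.mp hb2m).2
    omega
  have hsum : ∑ b ∈ P.parts, b.card = 17 := by
    rw [P.sum_card_parts, Nat.card_Icc]
  have hsub : {b1, b2} ⊆ P.parts := by
    intro x hx
    simp only [Finset.mem_insert, Finset.mem_singleton] at hx
    rcases hx with rfl | rfl <;> assumption
  have hsplit : ∑ b ∈ P.parts, b.card
      = (∑ b ∈ P.parts \ {b1, b2}, b.card) + (b1.card + b2.card) := by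
    rw [← Finset.sum_sdiff hsub, Finset.sum_pair hne]
  have hrest : ∑ b ∈ P.parts \ {b1, b2}, b.card ≤ 3 * (P.parts.card - 2) := by
    calc ∑ b ∈ P.parts \ {b1, b2}, b.card
        ≤ ∑ _b ∈ P.parts \ {b1, b2}, 3 :=
          Finset.sum_le_sum (fun b hb => hcard b (Finset.mem_sdiff.mp hb).1)
      _ = (P.parts \ {b1, b2}).card * 3 := Finset.sum_const 3
      _ = 3 * (P.parts.card - 2) := by
          rw [Finset.card_sdiff_of_subset hsub, Finset.card_pair hne]; ring
  have hc1 := hleft b1 hb1 hb1m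
  have hc2 := hright b2 hb2 hb2m
  have h2le : 2 ≤ P.parts.card := by
    have := Finset.card_le_card hsub
    rwa [Finset.card_pair hne] at this
  omega
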